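/- arXiv:1612.07446 — 2 statements merged into one kernel-verified Lean document; each statement's English description precedes it below -/
import Mathlib

section
/- Let H, F : ℝ → ℝ be twice continuously differentiable functions with H(x) ≥ 0, H′(x) ≥ 0, H″(x) ≥ 0 and F(x) ≥ 0, F′(x) ≥ 0, F″(x) ≥ 0 for all x ≥ 0. Let h be holomorphic on an open set U ⊆ ℂⁿ and define ρ : ℂⁿ → ℝ by ρ(z) := H(|h(z)|²)·F((Re h(z))²). Then for every z ∈ U and every w ∈ ℂⁿ, 𝓛ρ(z; w) ≥ ( H′(|h(z)|²)·F((Re h(z))²) + (1/2)·H(|h(z)|²)·F′((Re h(z))²) )·|Dh(z)w|². -/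
open Complex

/-- The Levi form of a twice real-differentiable real-valued function `φ` on `ℂⁿ`
at `z` in direction `w`: `𝓛φ(z; w) = (1/4) (D²φ(z)[w,w] + D²φ(z)[iw,iw])`, where
`D²φ(z)` is the second Fréchet derivative of `φ` over `ℝ`. -/
noncomputable def leviForm {n : ℕ} (φ : EuclideanSpace ℂ (Fin n) → ℝ)
    (z w : EuclideanSpace ℂ (Fin n)) : ℝ :=
  (1 / 4) * (iteratedFDeriv ℝ 2 φ z ![w, w] +
    iteratedFDeriv ℝ 2 φ z ![Complex.I • w, Complex.I • w])

/-!
For holomorphic `h` and a `C²` function `G` on `ℂ`, the second-order chain rule together with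
the `ℂ`-linearity of `Dh` and `D²h` gives `𝓛(G ∘ h)(z; w) = ¼ ΔG(h z) |Dh(z)w|²`: the terms
`DG(D²h[w,w])` and `DG(D²h[iw,iw]) = -DG(D²h[w,w])` cancel. For `G ζ = H(|ζ|²) F((Re ζ)²)`,
`ΔG = 4|ζ|² H''F + 4H'F + 8(Re ζ)² H'F' + 4(Re ζ)² HF'' + 2HF'`, and every term except
`4H'F + 2HF'` is nonnegative.

That `h` is `C²` in the first place comes from the Cauchy integral formula along complex lines:
`Dh(x)v = (2πi)⁻¹ ∮ h(x + ζv) ζ⁻² dζ` can be differentiated in `x` under the integral sign,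
the Cauchy estimate bounding `Dh` uniformly, so `x ↦ Dh(x)v` is holomorphic again.
-/

open Metric MeasureTheory Real Laplacian InnerProductSpace

section Holomorphic

variable {E F : Type*} [NormedAddCommGroup E] [NormedSpace ℂ E] [NormedAddCommGroup F]
  [NormedSpace ℂ F]

theorem fderiv_apply_eq_circleIntegral [CompleteSpace F] {f : E → F} {x v : E} {r : ℝ}
    (hr : 0 < r) (hf : ∀ τ : ℂ, ‖τ‖ ≤ r → DifferentiableAt ℂ f (x + τ • v)) :
    fderiv ℂ f x v = (2 * π * I)⁻¹ • ∮ ζ in C(0, r), (1 / ζ ^ 2) • f (x + ζ • v) := by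
  have hg : DifferentiableOn ℂ (fun τ : ℂ => f (x + τ • v)) (closedBall 0 r) := fun τ hτ =>
    ((hf τ (by simpa using hτ)).comp τ (by fun_prop)).differentiableWithinAt
  have hline := (hf 0 (by simp [hr.le])).deriv_comp_add_smul
  rw [zero_smul, add_zero] at hline
  have hcauchy := hg.deriv_eq_smul_circleIntegral hr
  simp only [sub_zero] at hcauchy
  rw [hcauchy, ← hline, inv_smul_smul₀ two_pi_I_ne_zero]

theorem norm_fderiv_le_of_forall_norm_le {f : E → F} {x : E} {r M : ℝ} (hr : 0 < r)
    (hf : ∀ y ∈ closedBall x r, DifferentiableAt ℂ f y) (hM : ∀ y ∈ closedBall x r, ‖f y‖ ≤ M) :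
    ‖fderiv ℂ f x‖ ≤ M / r := by
  have hM0 : 0 ≤ M := (norm_nonneg _).trans (hM x (mem_closedBall_self hr.le))
  refine ContinuousLinearMap.opNorm_le_bound _ (by positivity) fun v => ?_
  rcases eq_or_ne v 0 with rfl | hv
  · simp
  have hv0 : 0 < ‖v‖ := norm_pos_iff.mpr hv
  have hR : 0 < r / ‖v‖ := by positivity
  have hmem : ∀ τ : ℂ, ‖τ‖ ≤ r / ‖v‖ → x + τ • v ∈ closedBall x r := fun τ hτ => by
    rw [mem_closedBall_iff_norm, add_sub_cancel_left, norm_smul]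
    exact (le_div_iff₀ hv0).mp hτ
  have hg : DifferentiableOn ℂ (fun τ : ℂ => f (x + τ • v)) (closedBall 0 (r / ‖v‖)) :=
    fun τ hτ => ((hf _ (hmem τ (by simpa using hτ))).comp τ (by fun_prop)).differentiableWithinAt
  have hest := norm_deriv_le_of_forall_mem_sphere_norm_le hR
    (hg.mono closure_ball_subset_closedBall).diffContOnCl
    fun τ hτ => hM _ (hmem τ (by simp_all))
  have hline : deriv (fun τ : ℂ => f (x + τ • v)) 0 = fderiv ℂ f x v := by
    simpa using (hf _ (hmem 0 (by simp [hR.le]))).deriv_comp_add_smul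
  rwa [hline, div_div_eq_mul_div, mul_div_right_comm] at hest

theorem ContDiffAt.fderiv_fderiv_restrictScalars {h : E → F} {z : E} (hh : ContDiffAt ℂ 2 h z)
    (v w : E) : fderiv ℝ (fderiv ℝ h) z v w = fderiv ℂ (fderiv ℂ h) z v w := by
  have hD : fderiv ℝ h =ᶠ[nhds z] fun y => (fderiv ℂ h y).restrictScalars ℝ :=
    (hh.eventually (by simp)).mono fun y hy =>
      (hy.differentiableAt (by simp)).fderiv_restrictScalars ℝ
  have h2 : HasFDerivAt (fderiv ℂ h) (fderiv ℂ (fderiv ℂ h) z) z :=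
    ((hh.fderiv_right (m := 1) le_rfl).differentiableAt one_ne_zero).hasFDerivAt
  have hR : HasFDerivAt (fun y => (fderiv ℂ h y).restrictScalars ℝ) _ z :=
    (ContinuousLinearMap.restrictScalarsL ℂ E F ℝ ℝ).hasFDerivAt.comp z (h2.restrictScalars ℝ)
  rw [hD.fderiv_eq, hR.fderiv]
  rfl

end Holomorphic

section HolomorphicScalar

variable {E : Type*} [NormedAddCommGroup E] [NormedSpace ℂ E] {f : E → ℂ}

theorem differentiableAt_circleIntegral_comp_add_smul [FiniteDimensional ℂ E] {s : Set E}
    {x₀ v : E} {r C : ℝ} (hs : s ∈ nhds x₀) (hr : 0 < r)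
    (hf : ∀ x ∈ s, ∀ τ : ℂ, ‖τ‖ = r → DifferentiableAt ℂ f (x + τ • v))
    (hC : ∀ x ∈ s, ∀ τ : ℂ, ‖τ‖ = r → ‖fderiv ℂ f (x + τ • v)‖ ≤ C) :
    DifferentiableAt ℂ (fun x => ∮ ζ in C(0, r), (1 / ζ ^ 2) • f (x + ζ • v)) x₀ := by
  let : MeasurableSpace E := borel E
  have : BorelSpace E := ⟨rfl⟩
  set γ := circleMap 0 r
  have hγ : ∀ θ, ‖γ θ‖ = r := fun θ => by simp [γ, hr.le]
  have hγ0 : ∀ θ, γ θ ≠ 0 := fun θ => circleMap_ne_center hr.ne'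
  have hd : Continuous (deriv γ) := by
    rw [show deriv γ = fun θ => γ θ * I from funext (deriv_circleMap 0 r)]
    fun_prop
  have hk : Continuous fun θ => 1 / γ θ ^ 2 :=
    continuous_const.div ((continuous_circleMap 0 r).pow 2) fun θ => pow_ne_zero 2 (hγ0 θ)
  have hcont : ∀ x ∈ s, Continuous fun θ => f (x + γ θ • v) := fun x hx =>
    continuous_iff_continuousAt.2 fun θ =>
      (hf x hx _ (hγ θ)).continuousAt.comp (f := fun θ => x + γ θ • v) (x := θ) (by fun_prop)
  simp only [circleIntegral, intervalIntegral.integral_of_le two_pi_pos.le]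
  refine (hasFDerivAt_integral_of_dominated_of_fderiv_le
    (F' := fun x θ => deriv γ θ • (1 / γ θ ^ 2) • fderiv ℂ f (x + γ θ • v))
    (bound := fun _ => C / r) hs ?_ ?_ ?_ ?_ ?_ ?_).differentiableAt
  · filter_upwards [hs] with x hx
    exact (hd.smul (hk.smul (hcont x hx))).aestronglyMeasurable
  · exact (hd.smul (hk.smul (hcont x₀ (mem_of_mem_nhds hs)))).integrableOn_Ioc
  -- `E →L[ℂ] ℂ` is finite-dimensional, so the Borel measurable `fderiv ℂ f` is strongly measurable.
  · exact hd.aestronglyMeasurable.smul (hk.aestronglyMeasurable.smul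
      ((measurable_fderiv ℂ f).comp (by fun_prop)).aestronglyMeasurable)
  · refine ae_of_all _ fun θ x hx => ?_
    have hdγ : ‖deriv γ θ‖ = r := by simp [γ, deriv_circleMap, hγ]
    rw [norm_smul, norm_smul, hdγ, norm_div, norm_pow, hγ, norm_one]
    calc r * (1 / r ^ 2 * ‖fderiv ℂ f (x + γ θ • v)‖) ≤ r * (1 / r ^ 2 * C) := by
          gcongr; exact hC x hx _ (hγ θ)
      _ = C / r := by field_simp
  · exact integrableOn_const measure_Ioc_lt_top.ne
  · refine ae_of_all _ fun θ x hx => ?_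
    have hfx : HasFDerivAt (fun x => f (x + γ θ • v)) (fderiv ℂ f (x + γ θ • v)) x :=
      (hf x hx _ (hγ θ)).hasFDerivAt.comp x ((hasFDerivAt_id x).add_const _)
    exact (hfx.fun_const_smul _).fun_const_smul _

theorem DifferentiableOn.fderiv_apply [FiniteDimensional ℂ E] {U : Set E}
    (hf : DifferentiableOn ℂ f U) (hU : IsOpen U) (v : E) :
    DifferentiableOn ℂ (fun x => fderiv ℂ f x v) U := by
  intro z hz
  obtain ⟨ε, hε, hεU⟩ := nhds_basis_closedBall.mem_iff.mp (hU.mem_nhds hz)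
  obtain ⟨M, hM⟩ := (isCompact_closedBall z ε).exists_bound_of_continuousOn
    (hf.continuousOn.mono hεU)
  have hdiff : ∀ y ∈ closedBall z ε, DifferentiableAt ℂ f y := fun y hy =>
    hf.differentiableAt (hU.mem_nhds (hεU hy))
  have hsub : ∀ y ∈ closedBall z (ε / 2), closedBall y (ε / 2) ⊆ closedBall z ε := fun y hy =>
    closedBall_subset_closedBall' (by rw [mem_closedBall] at hy; linarith)
  have hC : ∀ y ∈ closedBall z (ε / 2), ‖fderiv ℂ f y‖ ≤ M / (ε / 2) := fun y hy =>
    norm_fderiv_le_of_forall_norm_le (half_pos hε) (fun y' hy' => hdiff y' (hsub y hy hy'))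
      fun y' hy' => hM y' (hsub y hy hy')
  set r := ε / (4 * (‖v‖ + 1))
  have hr : 0 < r := by positivity
  have hmem : ∀ x ∈ ball z (ε / 4), ∀ τ : ℂ, ‖τ‖ ≤ r → x + τ • v ∈ closedBall z (ε / 2) := by
    intro x hx τ hτ
    have hrv : r * ‖v‖ ≤ ε / 4 := by
      rw [div_mul_eq_mul_div, div_le_div_iff₀ (by positivity) (by norm_num)]
      nlinarith [norm_nonneg v]
    rw [mem_closedBall, dist_eq_norm, add_sub_right_comm]
    calc ‖x - z + τ • v‖ ≤ ‖x - z‖ + ‖τ‖ * ‖v‖ := (norm_add_le _ _).trans_eq (by rw [norm_smul])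
      _ ≤ ε / 4 + r * ‖v‖ := by
          gcongr
          · exact (mem_ball_iff_norm.mp hx).le
      _ ≤ ε / 2 := by linarith
  have hdiff' : ∀ x ∈ ball z (ε / 4), ∀ τ : ℂ, ‖τ‖ ≤ r → DifferentiableAt ℂ f (x + τ • v) :=
    fun x hx τ hτ => hdiff _ (closedBall_subset_closedBall (by linarith) (hmem x hx τ hτ))
  have hball : ball z (ε / 4) ∈ nhds z := ball_mem_nhds z (by positivity)
  have hrepr : (fun x => fderiv ℂ f x v) =ᶠ[nhds z]
      fun x => (2 * π * I)⁻¹ • ∮ ζ in C(0, r), (1 / ζ ^ 2) • f (x + ζ • v) :=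
    Filter.eventually_of_mem hball fun x hx => fderiv_apply_eq_circleIntegral hr (hdiff' x hx)
  refine (((differentiableAt_circleIntegral_comp_add_smul hball hr
    (fun x hx τ hτ => hdiff' x hx τ hτ.le) fun x hx τ hτ => hC _ (hmem x hx τ hτ.le)).fun_const_smul
      _).congr_of_eventuallyEq hrepr).differentiableWithinAt

theorem DifferentiableOn.contDiffOn_of_finiteDimensional [FiniteDimensional ℂ E] {U : Set E}
    (hf : DifferentiableOn ℂ f U) (hU : IsOpen U) (n : ℕ) : ContDiffOn ℂ n f U := by
  induction n generalizing f with
  | zero => exact contDiffOn_zero.mpr hf.continuousOn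
  | succ n ih =>
    rw [Nat.cast_succ]
    refine contDiffOn_succ_of_fderiv_apply hf (by simp) fun v => ?_
    exact (ih (hf.fderiv_apply hU v)).congr fun x hx => by rw [fderivWithin_of_isOpen hU hx]

end HolomorphicScalar

section SecondDerivative

variable {𝕜 : Type*} [NontriviallyNormedField 𝕜] {E F G : Type*} [NormedAddCommGroup E]
  [NormedSpace 𝕜 E] [NormedAddCommGroup F] [NormedSpace 𝕜 F] [NormedAddCommGroup G]
  [NormedSpace 𝕜 G]

theorem fderiv_fderiv_comp_apply {g : F → G} {f : E → F} {x : E}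
    (hg : ContDiffAt 𝕜 2 g (f x)) (hf : ContDiffAt 𝕜 2 f x) (v w : E) :
    fderiv 𝕜 (fderiv 𝕜 (g ∘ f)) x v w =
      fderiv 𝕜 (fderiv 𝕜 g) (f x) (fderiv 𝕜 f x v) (fderiv 𝕜 f x w) +
        fderiv 𝕜 g (f x) (fderiv 𝕜 (fderiv 𝕜 f) x v w) := by
  have hg' : ∀ᶠ y in nhds x, DifferentiableAt 𝕜 g (f y) :=
    hf.continuousAt.eventually (hg.eventually (by simp)) |>.mono
      fun y hy => hy.differentiableAt (by simp)
  have hfd : ∀ᶠ y in nhds x, DifferentiableAt 𝕜 f y :=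
    (hf.eventually (by simp)).mono fun y hy => hy.differentiableAt (by simp)
  have hD : fderiv 𝕜 (g ∘ f) =ᶠ[nhds x] fun y => (fderiv 𝕜 g (f y)).comp (fderiv 𝕜 f y) := by
    filter_upwards [hg', hfd] with y hgy hfy using fderiv_comp y hgy hfy
  have h2g : DifferentiableAt 𝕜 (fderiv 𝕜 g) (f x) :=
    (hg.fderiv_right (m := 1) le_rfl).differentiableAt one_ne_zero
  have h2f : DifferentiableAt 𝕜 (fderiv 𝕜 f) x :=
    (hf.fderiv_right (m := 1) le_rfl).differentiableAt one_ne_zero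
  have hcomp : HasFDerivAt (fun y => (fderiv 𝕜 g (f y)).comp (fderiv 𝕜 f y)) _ x :=
    (h2g.hasFDerivAt.comp x (hf.differentiableAt (by simp)).hasFDerivAt).clm_comp h2f.hasFDerivAt
  rw [hD.fderiv_eq, hcomp.fderiv]
  simp [add_comm]

theorem ContDiffAt.deriv_deriv_comp_add_smul {f : E → F} {x v : E} {t : 𝕜}
    (hf : ContDiffAt 𝕜 2 f (x + t • v)) :
    deriv (deriv fun s => f (x + s • v)) t = fderiv 𝕜 (fderiv 𝕜 f) (x + t • v) v v := by
  have hline : deriv (fun s => f (x + s • v)) =ᶠ[nhds t] fun s => fderiv 𝕜 f (x + s • v) v := by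
    have : Filter.Tendsto (fun s : 𝕜 => x + s • v) (nhds t) (nhds (x + t • v)) :=
      (continuous_const.add (continuous_id.smul continuous_const)).tendsto t
    filter_upwards [this.eventually (hf.eventually (by simp))] with s hs
    exact (hs.differentiableAt (by simp)).deriv_comp_add_smul
  have h2f : DifferentiableAt 𝕜 (fderiv 𝕜 f) (x + t • v) :=
    (hf.fderiv_right (m := 1) le_rfl).differentiableAt one_ne_zero
  rw [hline.deriv_eq, (h2f.clm_apply (differentiableAt_const v)).deriv_comp_add_smul,
    fderiv_clm_apply h2f (differentiableAt_const v)]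
  simp

theorem deriv_deriv_mul {A B : 𝕜 → 𝕜} (hA : ContDiff 𝕜 2 A) (hB : ContDiff 𝕜 2 B) (t : 𝕜) :
    deriv (deriv fun s => A s * B s) t =
      deriv (deriv A) t * B t + 2 * (deriv A t * deriv B t) + A t * deriv (deriv B) t := by
  have hA1 := hA.differentiable two_ne_zero
  have hB1 := hB.differentiable two_ne_zero
  have h1 : deriv (fun s => A s * B s) = fun s => deriv A s * B s + A s * deriv B s :=
    funext fun s => deriv_mul (hA1 s) (hB1 s)
  rw [h1]
  exact (((hA.differentiable_deriv_two t).hasDerivAt.mul (hB1 t).hasDerivAt).add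
    ((hA1 t).hasDerivAt.mul (hB.differentiable_deriv_two t).hasDerivAt)).deriv.trans (by ring)

theorem deriv_comp_sq_add {Φ : 𝕜 → 𝕜} (hΦ : Differentiable 𝕜 Φ) (c t : 𝕜) :
    deriv (fun s => Φ (s ^ 2 + c)) t = 2 * t * deriv Φ (t ^ 2 + c) :=
  ((hΦ _).hasDerivAt.comp t ((hasDerivAt_pow 2 t).add_const c)).deriv.trans (by ring)

theorem deriv_deriv_comp_sq_add {Φ : 𝕜 → 𝕜} (hΦ : ContDiff 𝕜 2 Φ) (c t : 𝕜) :
    deriv (deriv fun s => Φ (s ^ 2 + c)) t =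
      4 * t ^ 2 * deriv (deriv Φ) (t ^ 2 + c) + 2 * deriv Φ (t ^ 2 + c) := by
  rw [funext (deriv_comp_sq_add (hΦ.differentiable two_ne_zero) c)]
  exact (((hasDerivAt_id t).const_mul 2).mul ((hΦ.differentiable_deriv_two _).hasDerivAt.comp t
    ((hasDerivAt_pow 2 t).add_const c))).deriv.trans (by simp; ring)

end SecondDerivative

section ComplexPlane

variable {F : Type*} [NormedAddCommGroup F] [NormedSpace ℝ F] {G : ℂ → F} {p : ℂ}

theorem ContDiffAt.fderiv_fderiv_add_I_smul (hG : ContDiffAt ℝ 2 G p) (c : ℂ) :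
    fderiv ℝ (fderiv ℝ G) p c c + fderiv ℝ (fderiv ℝ G) p (I • c) (I • c) =
      ‖c‖ ^ 2 • Δ G p := by
  have hsymm := hG.isSymmSndFDerivAt (by simp) 1 I
  obtain ⟨a, b, rfl⟩ : ∃ a b : ℝ, c = a • (1 : ℂ) + b • I :=
    ⟨c.re, c.im, by apply Complex.ext <;> simp⟩
  have hI : I • (a • (1 : ℂ) + b • I) = (-b) • (1 : ℂ) + a • I := by apply Complex.ext <;> simp
  have hnorm : ‖a • (1 : ℂ) + b • I‖ ^ 2 = a ^ 2 + b ^ 2 := by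
    rw [Complex.sq_norm, Complex.normSq_apply]; simp; ring
  simp only [laplacian_eq_iteratedFDeriv_complexPlane, iteratedFDeriv_two_apply, hI, hnorm,
    map_add, map_smul, add_apply, smul_apply, hsymm, Matrix.cons_val_zero, Matrix.cons_val_one]
  module

theorem ContDiffAt.laplacian_eq_deriv_deriv (hG : ContDiffAt ℝ 2 G p) :
    Δ G p = deriv (deriv fun s : ℝ => G (s + p.im * I)) p.re +
      deriv (deriv fun s : ℝ => G (p.re + s * I)) p.im := by
  have hre : (p.im * I : ℂ) + p.re • (1 : ℂ) = p := by apply Complex.ext <;> simp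
  have him : (p.re : ℂ) + p.im • I = p := by apply Complex.ext <;> simp
  have h1 := (hre ▸ hG).deriv_deriv_comp_add_smul
  have h2 := (him ▸ hG).deriv_deriv_comp_add_smul
  rw [hre] at h1
  rw [him] at h2
  simp only [laplacian_eq_iteratedFDeriv_complexPlane, iteratedFDeriv_two_apply,
    Matrix.cons_val_zero, Matrix.cons_val_one, ← h1, ← h2, Complex.real_smul, mul_one, add_comm]

end ComplexPlane

theorem leviForm_comp_eq_laplacian {n : ℕ} {G : ℂ → ℝ} {h : EuclideanSpace ℂ (Fin n) → ℂ}
    {z : EuclideanSpace ℂ (Fin n)} (hG : ContDiffAt ℝ 2 G (h z)) (hh : ContDiffAt ℂ 2 h z)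
    (w : EuclideanSpace ℂ (Fin n)) :
    leviForm (G ∘ h) z w = ‖fderiv ℂ h z w‖ ^ 2 * Δ G (h z) / 4 := by
  have hhR : ContDiffAt ℝ 2 h z := hh.restrict_scalars ℝ
  have hD : ∀ v, fderiv ℝ h z v = fderiv ℂ h z v := fun v => by
    rw [(hh.differentiableAt (by simp)).fderiv_restrictScalars ℝ]; rfl
  have hI : fderiv ℂ (fderiv ℂ h) z (I • w) (I • w) = -fderiv ℂ (fderiv ℂ h) z w w := by
    simp [← mul_assoc]
  simp only [leviForm, iteratedFDeriv_two_apply, Matrix.cons_val_zero, Matrix.cons_val_one,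
    fderiv_fderiv_comp_apply hG hhR, hh.fderiv_fderiv_restrictScalars, hD, hI, map_neg,
    (fderiv ℂ h z).map_smul]
  have hΔ := hG.fderiv_fderiv_add_I_smul (fderiv ℂ h z w)
  simp only [smul_eq_mul] at hΔ ⊢
  linarith

/-- The function `G` on `ℂ` with `ρ = G ∘ h`. -/
noncomputable def modelProfile (H F : ℝ → ℝ) (ζ : ℂ) : ℝ :=
  H (‖ζ‖ ^ 2) * F (ζ.re ^ 2)

theorem contDiff_modelProfile {H F : ℝ → ℝ} (hH : ContDiff ℝ 2 H) (hF : ContDiff ℝ 2 F) :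
    ContDiff ℝ 2 (modelProfile H F) :=
  (hH.comp (contDiff_norm_sq ℝ)).mul (hF.comp (reCLM.contDiff.pow 2))

theorem laplacian_modelProfile {H F : ℝ → ℝ} (hH : ContDiff ℝ 2 H) (hF : ContDiff ℝ 2 F)
    (p : ℂ) :
    Δ (modelProfile H F) p =
      4 * ‖p‖ ^ 2 * deriv (deriv H) (‖p‖ ^ 2) * F (p.re ^ 2) +
        4 * deriv H (‖p‖ ^ 2) * F (p.re ^ 2) +
        8 * p.re ^ 2 * deriv H (‖p‖ ^ 2) * deriv F (p.re ^ 2) +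
        4 * p.re ^ 2 * H (‖p‖ ^ 2) * deriv (deriv F) (p.re ^ 2) +
        2 * H (‖p‖ ^ 2) * deriv F (p.re ^ 2) := by
  set a := p.re
  set b := p.im
  have hp : ‖p‖ ^ 2 = a ^ 2 + b ^ 2 := by
    rw [Complex.sq_norm, Complex.normSq_apply]; ring
  have hxx : deriv (deriv fun s : ℝ => modelProfile H F (s + b * I)) a =
      (4 * a ^ 2 * deriv (deriv H) (a ^ 2 + b ^ 2) + 2 * deriv H (a ^ 2 + b ^ 2)) * F (a ^ 2) +
        8 * a ^ 2 * deriv H (a ^ 2 + b ^ 2) * deriv F (a ^ 2) +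
        H (a ^ 2 + b ^ 2) * (4 * a ^ 2 * deriv (deriv F) (a ^ 2) + 2 * deriv F (a ^ 2)) := by
    have hline : (fun s : ℝ => modelProfile H F (s + b * I)) =
        fun s => H (s ^ 2 + b ^ 2) * F (s ^ 2 + 0) := by
      funext s; simp [modelProfile, Complex.sq_norm, Complex.normSq_add_mul_I]
    rw [hline, deriv_deriv_mul (A := fun s => H (s ^ 2 + b ^ 2)) (B := fun s => F (s ^ 2 + 0))
      (hH.comp (by fun_prop)) (hF.comp (by fun_prop)), deriv_deriv_comp_sq_add hH,
      deriv_deriv_comp_sq_add hF, deriv_comp_sq_add (hH.differentiable two_ne_zero),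
      deriv_comp_sq_add (hF.differentiable two_ne_zero), add_zero]
    ring
  have hyy : deriv (deriv fun s : ℝ => modelProfile H F (a + s * I)) b =
      (4 * b ^ 2 * deriv (deriv H) (b ^ 2 + a ^ 2) + 2 * deriv H (b ^ 2 + a ^ 2)) * F (a ^ 2) := by
    have hline : (fun s : ℝ => modelProfile H F (a + s * I)) =
        fun s => H (s ^ 2 + a ^ 2) * F (a ^ 2) := by
      funext s; simp [modelProfile, Complex.sq_norm, Complex.normSq_add_mul_I, add_comm]
    rw [hline, deriv_deriv_mul (A := fun s => H (s ^ 2 + a ^ 2)) (hH.comp (by fun_prop))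
      contDiff_const, deriv_deriv_comp_sq_add hH]
    simp
  rw [(contDiff_modelProfile hH hF).contDiffAt.laplacian_eq_deriv_deriv, hxx, hyy, hp,
    add_comm (b ^ 2)]
  ring

/-- Let `H, F : ℝ → ℝ` be `C²` with `H, H', H'' ≥ 0` and `F, F', F'' ≥ 0` on `[0,∞)`,
let `h` be holomorphic on an open `U ⊆ ℂⁿ`, and set `ρ(z) = H(|h z|²) F((Re h z)²)`.
Then for `z ∈ U` and `w ∈ ℂⁿ`,
`𝓛ρ(z; w) ≥ (H'(|h z|²) F((Re h z)²) + (1/2) H(|h z|²) F'((Re h z)²)) |Dh(z)w|²`. -/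
theorem leviForm_model_lower_bound {n : ℕ}
    (H F : ℝ → ℝ) (hH : ContDiff ℝ 2 H) (hF : ContDiff ℝ 2 F)
    (hH0 : ∀ x : ℝ, 0 ≤ x → 0 ≤ H x)
    (hH1 : ∀ x : ℝ, 0 ≤ x → 0 ≤ deriv H x)
    (hH2 : ∀ x : ℝ, 0 ≤ x → 0 ≤ deriv (deriv H) x)
    (hF0 : ∀ x : ℝ, 0 ≤ x → 0 ≤ F x)
    (hF1 : ∀ x : ℝ, 0 ≤ x → 0 ≤ deriv F x)
    (hF2 : ∀ x : ℝ, 0 ≤ x → 0 ≤ deriv (deriv F) x)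
    {U : Set (EuclideanSpace ℂ (Fin n))} (hU : IsOpen U)
    {h : EuclideanSpace ℂ (Fin n) → ℂ} (hh : DifferentiableOn ℂ h U)
    {z : EuclideanSpace ℂ (Fin n)} (hz : z ∈ U) (w : EuclideanSpace ℂ (Fin n)) :
    leviForm (fun ζ => H (‖h ζ‖ ^ 2) * F ((h ζ).re ^ 2)) z w ≥
      (deriv H (‖h z‖ ^ 2) * F ((h z).re ^ 2) +
        (1 / 2) * H (‖h z‖ ^ 2) * deriv F ((h z).re ^ 2)) *
        ‖fderiv ℂ h z w‖ ^ 2 := by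
  have hh2 : ContDiffAt ℂ 2 h z :=
    (hh.contDiffOn_of_finiteDimensional hU 2).contDiffAt (hU.mem_nhds hz)
  have hs := sq_nonneg ‖h z‖
  have ha := sq_nonneg (h z).re
  have hΔ : 4 * (deriv H (‖h z‖ ^ 2) * F ((h z).re ^ 2) +
      (1 / 2) * H (‖h z‖ ^ 2) * deriv F ((h z).re ^ 2)) ≤ Δ (modelProfile H F) (h z) := by
    rw [laplacian_modelProfile hH hF]
    nlinarith [mul_nonneg (mul_nonneg hs (hH2 _ hs)) (hF0 _ ha),
      mul_nonneg (mul_nonneg ha (hH1 _ hs)) (hF1 _ ha),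
      mul_nonneg (mul_nonneg ha (hH0 _ hs)) (hF2 _ ha)]
  change leviForm (modelProfile H F ∘ h) z w ≥ _
  rw [leviForm_comp_eq_laplacian (contDiff_modelProfile hH hF).contDiffAt hh2]
  nlinarith [mul_le_mul_of_nonneg_left hΔ (sq_nonneg ‖fderiv ℂ h z w‖)]
end

section
/- Fix natural numbers n and q with q ≥ 1, let u : (Fin (q+1) → Fin n) → ℂ be alternating, and let λ : Fin n → ℂ. Then Σ_{l ∈ Fin n} Σ_{I : Fin (q−1) → Fin n strictly increasing} | Σ_{j ∈ Fin n} λ(j)·u(l :: j :: I) |² = q · Σ_{I : Fin q → Fin n strictly increasing} | Σ_{j ∈ Fin n} λ(j)·u(j :: I) |². -/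
/-!
Terms with `l` among the entries of `I` vanish because `u` is alternating. The remaining pairs
`(l, I)`, with `I` increasing and `l ∉ I`, correspond bijectively to pairs `(k, J)` with `J`
increasing of length `q` and `k` a position in `J`, via `l = J k` and `I = J` with its `k`-th entry
removed. Moving `l` past `j` to position `k + 1` is a cyclic permutation that does not depend on
`j`, so each term equals `|Σ_j λ_j u(j :: J)|²`, and each `J` is counted once for every one of its
`q` positions.
-/

open Finset

def IsAlternating {N : ℕ} {α R : Type*} [Ring R] (u : (Fin N → α) → R) : Prop :=
  ∀ (v : Fin N → α) (σ : Equiv.Perm (Fin N)), u (v ∘ σ) = ((Equiv.Perm.sign σ : ℤ) : R) * u v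

theorem IsAlternating.eq_zero_of_not_injective {N : ℕ} {α R : Type*} [Ring R] [NoZeroDivisors R]
    [CharZero R] {u : (Fin N → α) → R} (hu : IsAlternating u) {v : Fin N → α}
    (hv : ¬ Function.Injective v) : u v = 0 := by
  obtain ⟨a, b, hab, hne⟩ := Function.not_injective_iff.mp hv
  have hswap : v ∘ Equiv.swap a b = v := by
    funext x
    simp only [Function.comp_apply, Equiv.swap_apply_def]
    split_ifs <;> simp_all
  have h := hu v (Equiv.swap a b)
  rw [hswap, Equiv.Perm.sign_swap hne, Units.val_neg, Units.val_one, Int.cast_neg, Int.cast_one,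
    neg_one_mul] at h
  exact CharZero.eq_neg_self_iff.mp h

section RemoveNth

variable {N : ℕ} {α : Type*}

theorem Fin.succ_removeNth_cons (k : Fin (N + 1)) (a : α) (x : Fin (N + 1) → α) :
    k.succ.removeNth (Fin.cons a x : Fin (N + 2) → α) = Fin.cons a (k.removeNth x) := by
  ext i
  cases i using Fin.cases <;> simp [Fin.removeNth_apply, Fin.succ_succAbove_succ]

theorem Fin.range_eq_insert_range_removeNth (x : Fin (N + 1) → α) (k : Fin (N + 1)) :
    Set.range x = insert (x k) (Set.range (k.removeNth x)) := by
  rw [← Fin.range_cons, Fin.cons_removeNth_eq_comp_cycleRange_symm,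
    (Equiv.surjective _).range_comp]

theorem Function.Injective.apply_notMem_range_removeNth {x : Fin (N + 1) → α}
    (hx : Function.Injective x) (k : Fin (N + 1)) : x k ∉ Set.range (k.removeNth x) := by
  rintro ⟨i, hi⟩
  exact Fin.succAbove_ne k i (hx hi)

variable [LinearOrder α]

theorem StrictMono.eq_of_apply_eq_of_removeNth_eq {J J' : Fin (N + 1) → α} (hJ : StrictMono J)
    (hJ' : StrictMono J') {k k' : Fin (N + 1)} (happly : J k = J' k')
    (hremove : k.removeNth J = k'.removeNth J') : k = k' ∧ J = J' := by
  have hJJ' : J = J' := by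
    rw [← hJ.range_inj hJ', Fin.range_eq_insert_range_removeNth J k,
      Fin.range_eq_insert_range_removeNth J' k', happly, hremove]
  subst hJJ'
  exact ⟨hJ.injective happly, rfl⟩

theorem StrictMono.exists_removeNth_eq [Fintype α] {I : Fin N → α} (hI : StrictMono I) {l : α}
    (hl : l ∉ Set.range I) :
    ∃ (k : Fin (N + 1)) (J : Fin (N + 1) → α), StrictMono J ∧ J k = l ∧ k.removeNth J = I := by
  set s : Finset α := insert l (univ.image I)
  have hs : s.card = N + 1 := by
    rw [card_insert_of_notMem (by simpa using hl), card_image_of_injective _ hI.injective,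
      card_univ, Fintype.card_fin]
  set J := s.orderEmbOfFin hs
  have hrange : Set.range J = insert l (Set.range I) := by
    simp [J, s, range_orderEmbOfFin]
  obtain ⟨k, hk⟩ : l ∈ Set.range J := hrange ▸ Set.mem_insert _ _
  have hl' : l ∉ Set.range (k.removeNth J) := hk ▸ J.injective.apply_notMem_range_removeNth k
  rw [Fin.range_eq_insert_range_removeNth J k, hk] at hrange
  have hremove : Set.range (k.removeNth J) = Set.range I := by
    rw [← Set.insert_sdiff_self_of_notMem hl', hrange, Set.insert_sdiff_self_of_notMem hl]
  exact ⟨k, J, J.strictMono, hk,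
    ((J.strictMono.comp (Fin.strictMono_succAbove k)).range_inj hI).mp hremove⟩

theorem Finset.sum_strictMono_removeNth [Fintype α] {M : Type*} [AddCommMonoid M]
    (f : α → (Fin N → α) → M) :
    ∑ l, ∑ I ∈ univ.filter (fun I : Fin N → α => StrictMono I ∧ l ∉ Set.range I), f l I =
      ∑ k : Fin (N + 1), ∑ J ∈ univ.filter (fun J : Fin (N + 1) → α => StrictMono J),
        f (J k) (k.removeNth J) := by
  simp only [sum_filter]
  rw [← Fintype.sum_prod_type', ← Fintype.sum_prod_type', ← sum_filter, ← sum_filter]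
  symm
  refine sum_nbij (fun x => (x.2 x.1, x.1.removeNth x.2)) ?_ ?_ ?_ (fun _ _ => rfl)
  · rintro ⟨k, J⟩ hJ
    simp only [mem_filter, mem_univ, true_and] at hJ ⊢
    exact ⟨hJ.comp (Fin.strictMono_succAbove k), hJ.injective.apply_notMem_range_removeNth k⟩
  · rintro ⟨k, J⟩ hJ ⟨k', J'⟩ hJ' h
    simp only [coe_filter, mem_univ, true_and, Set.mem_ofPred_eq, Prod.mk.injEq] at hJ hJ' h
    simpa only [Prod.mk.injEq] using hJ.eq_of_apply_eq_of_removeNth_eq hJ' h.1 h.2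
  · rintro ⟨l, I⟩ hI
    simp only [coe_filter, mem_univ, true_and, Set.mem_ofPred_eq] at hI
    obtain ⟨k, J, hJ, hk, hremove⟩ := hI.1.exists_removeNth_eq hI.2
    exact ⟨(k, J), by simpa using hJ, by simp only [hk, hremove]⟩

end RemoveNth

section Contraction

variable {N : ℕ} {α : Type*} [Fintype α]

def contraction {R : Type*} [Semiring R] (lam : α → R) (u : (Fin (N + 1) → α) → R)
    (v : Fin N → α) : R :=
  ∑ j, lam j * u (Fin.cons j v)

theorem IsAlternating.contraction_cons_eq_zero {R : Type*} [Ring R] [NoZeroDivisors R]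
    [CharZero R] {u : (Fin (N + 2) → α) → R} (hu : IsAlternating u) (lam : α → R) {l : α}
    {I : Fin N → α} (hl : l ∈ Set.range I) :
    contraction lam (fun w => u (Fin.cons l w)) I = 0 := by
  obtain ⟨i, hi⟩ := hl
  refine sum_eq_zero fun j _ => ?_
  dsimp only
  rw [hu.eq_zero_of_not_injective, mul_zero]
  intro hinj
  exact Fin.succ_ne_zero _ (@hinj 0 i.succ.succ (by simp [hi])).symm

variable {𝕜 : Type*} [NormedField 𝕜]

theorem IsAlternating.norm_contraction_cons_removeNth {u : (Fin (N + 2) → α) → 𝕜}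
    (hu : IsAlternating u) (lam : α → 𝕜) (J : Fin (N + 1) → α) (k : Fin (N + 1)) :
    ‖contraction lam (fun w => u (Fin.cons (J k) w)) (k.removeNth J)‖ = ‖contraction lam u J‖ := by
  set ε : 𝕜 := ((Equiv.Perm.sign k.succ.cycleRange.symm : ℤ) : 𝕜)
  have hterm : ∀ j, u (Fin.cons (J k) (Fin.cons j (k.removeNth J))) = ε * u (Fin.cons j J) := by
    intro j
    have hperm := Fin.cons_removeNth_eq_comp_cycleRange_symm (Fin.cons j J : Fin (N + 2) → α) k.succ
    rw [Fin.cons_succ, Fin.succ_removeNth_cons] at hperm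
    rw [hperm]
    exact hu _ _
  have hε : ‖ε‖ = 1 := by
    rcases Int.units_eq_one_or (Equiv.Perm.sign k.succ.cycleRange.symm) with h | h <;> simp [ε, h]
  simp only [contraction, hterm, mul_left_comm _ ε, ← mul_sum, norm_mul, hε, one_mul]

theorem IsAlternating.sum_norm_sq_contraction_cons [LinearOrder α] [CharZero 𝕜]
    {u : (Fin (N + 2) → α) → 𝕜} (hu : IsAlternating u) (lam : α → 𝕜) :
    ∑ l, ∑ I ∈ univ.filter (fun I : Fin N → α => StrictMono I),
        ‖contraction lam (fun w => u (Fin.cons l w)) I‖ ^ 2 =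
      ((N + 1 : ℕ) : ℝ) * ∑ J ∈ univ.filter (fun J : Fin (N + 1) → α => StrictMono J),
        ‖contraction lam u J‖ ^ 2 := by
  have hfresh : ∀ l, ∑ I ∈ univ.filter (fun I : Fin N → α => StrictMono I),
        ‖contraction lam (fun w => u (Fin.cons l w)) I‖ ^ 2 =
      ∑ I ∈ univ.filter (fun I : Fin N → α => StrictMono I ∧ l ∉ Set.range I),
        ‖contraction lam (fun w => u (Fin.cons l w)) I‖ ^ 2 := by
    intro l
    rw [← filter_filter]
    refine (sum_filter_of_ne fun I _ hI hl => ?_).symm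
    simp [hu.contraction_cons_eq_zero lam hl] at hI
  simp only [hfresh, sum_strictMono_removeNth, hu.norm_contraction_cons_removeNth, sum_const,
    card_univ, Fintype.card_fin, nsmul_eq_mul]

end Contraction

/-- Let `q ≥ 1`, `u : (Fin (q+1) → Fin n) → ℂ` alternating, and `lam : Fin n → ℂ`.  Then
`Σ_l Σ_{I : Fin (q-1) → Fin n strictly increasing} |Σ_j lam j · u (l :: j :: I)|²
  = q · Σ_{I : Fin q → Fin n strictly increasing} |Σ_j lam j · u (j :: I)|²`. -/
theorem sum_sq_contraction_cons_alternating (n q : ℕ) (hq : 1 ≤ q)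
    (u : (Fin (q + 1) → Fin n) → ℂ)
    (halt : ∀ (v : Fin (q + 1) → Fin n) (σ : Equiv.Perm (Fin (q + 1))),
      u (v ∘ σ) = ((Equiv.Perm.sign σ : ℤ) : ℂ) * u v)
    (lam : Fin n → ℂ) :
    ∑ l : Fin n,
        ∑ I ∈ Finset.univ.filter (fun I : Fin (q - 1) → Fin n => StrictMono I),
          ‖∑ j : Fin n, lam j *
            u ((Fin.cons l (Fin.cons j I)) ∘
              Fin.cast (show q + 1 = q - 1 + 1 + 1 by omega))‖ ^ 2 =
      (q : ℝ) *
        ∑ I ∈ Finset.univ.filter (fun I : Fin q → Fin n => StrictMono I),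
          ‖∑ j : Fin n, lam j * u (Fin.cons j I)‖ ^ 2 := by
  obtain ⟨p, rfl⟩ : ∃ p, q = p + 1 := ⟨q - 1, by omega⟩
  -- once `q = p + 1`, `q - 1` reduces to `p` and the `Fin.cast` to the identity
  exact IsAlternating.sum_norm_sq_contraction_cons halt lam
end
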